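/- arXiv:1002.1377 — 2 statements merged into one kernel-verified Lean document; each statement's English description precedes it below -/
import Mathlib

section
/- For every positive integer n, the number of subtrees Υ of the infinite binary tree whose set Q of terminal (leaf) nodes satisfies Σ_{t∈Q} |t| ≤ n does not exceed (4e)ⁿ. -/
open scoped ENNReal

/-- A node of the infinite binary tree `T` is a finite binary string;
its level `|t|` is its length. -/
abbrev Node : Type := List Bool

/-- `μ` belongs to `ℓ₁(T)`, i.e. `Σ_t |μ(t)| < ∞`. -/
def MemL1 (μ : Node → ℝ) : Prop := Summable fun t : Node => |μ t|

/-- The `ℓ₁(T)` norm `‖μ‖₁ = Σ_t |μ(t)|`. -/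
noncomputable def l1Norm (μ : Node → ℝ) : ℝ := ∑' t : Node, |μ t|

/-- `(V*μ)(t) = Σ_{u ⪰ t} μ(u)`, the sum over all nodes `u` having `t` as a prefix
(including `u = t`). -/
noncomputable def Vstar (μ : Node → ℝ) (t : Node) : ℝ := ∑' u : {u : Node // t <+: u}, μ u.1

/-- The weight `w(t) = (1 + |t|)^{-β}`. -/
noncomputable def wgt (β : ℝ) (t : Node) : ℝ := ((1 : ℝ) + (t.length : ℝ)) ^ (-β)

/-- The squared distance of `f, g` in the weighted space `ℓ₂(T,W)`,
`Σ_t w(t) (f(t) - g(t))²`, computed in `ℝ≥0∞`. -/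
noncomputable def distSqW (β : ℝ) (f g : Node → ℝ) : ℝ≥0∞ :=
  ∑' t : Node, ENNReal.ofReal (wgt β t * (f t - g t) ^ 2)

/-- The variation of `μ` at `t`: `‖μ‖(t) = Σ_{u ⪰ t} |μ(u)|`. -/
noncomputable def varAt (μ : Node → ℝ) (t : Node) : ℝ :=
  ∑' u : {u : Node // t <+: u}, |μ u.1|

/-- The `n`-essential subtree `Υ^μ`: starting from the root, a node is included
as long as `‖μ‖(t) > |t|/n`; the construction stops at nodes with `‖μ‖(t) ≤ |t|/n`.
Thus `t ∈ Υ^μ` iff every prefix `s` of `t` (including `t` itself) satisfies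
`‖μ‖(s) > |s|/n`. -/
def essTree (n : ℕ) (μ : Node → ℝ) : Set Node :=
  {t : Node | ∀ s : Node, s <+: t → (s.length : ℝ) / (n : ℝ) < varAt μ s}

/-- The terminal (leaf) nodes of a subtree `Υ`: nodes of `Υ` none of whose children
belongs to `Υ`. -/
def terminalNodes (Υ : Set Node) : Set Node :=
  {t : Node | t ∈ Υ ∧ ∀ b : Bool, t ++ [b] ∉ Υ}

/-!
A finite subtree is covered by the root together with the nonempty prefixes of its terminal
nodes, so a subtree whose terminal levels sum to at most `n` has at most `n + 1` nodes, and all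
its nodes lie at level at most `n`. Reading the nodes as addresses (`false` = left,
`true` = right), such a subtree is the node set of a binary tree with at most `n + 1` nodes. There
are `catalan m` binary trees with `m` nodes, and `∑_{m ≤ n+1} catalan m ≤ 2 · 4ⁿ ≤ (4e)ⁿ`.
-/

open Finset

theorem catalan_succ_le_four_mul (m : ℕ) : catalan (m + 1) ≤ 4 * catalan m := by
  have h₁ : (m + 2) * catalan (m + 1) = (m + 1).centralBinom :=
    succ_mul_catalan_eq_centralBinom (m + 1)
  have h₂ : (m + 1) * catalan m = m.centralBinom := succ_mul_catalan_eq_centralBinom m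
  have h₃ := Nat.succ_mul_centralBinom_succ m
  have hrec : (m + 2) * catalan (m + 1) = 2 * (2 * m + 1) * catalan m := by
    refine Nat.eq_of_mul_eq_mul_left (by positivity : 0 < m + 1) ?_
    rw [h₁, h₃, ← h₂]; ring
  nlinarith

theorem catalan_succ_le_four_pow : ∀ m : ℕ, catalan (m + 1) ≤ 4 ^ m
  | 0 => by simp [catalan_one]
  | m + 1 => by
    calc catalan (m + 2) ≤ 4 * catalan (m + 1) := catalan_succ_le_four_mul _
      _ ≤ 4 * 4 ^ m := by gcongr; exact catalan_succ_le_four_pow m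
      _ = 4 ^ (m + 1) := by ring

theorem sum_range_catalan_le (n : ℕ) : ∑ i ∈ range (n + 2), catalan i ≤ 2 * 4 ^ n := by
  induction n with
  | zero => simp [sum_range_succ, catalan_zero, catalan_one]
  | succ n ih =>
    calc ∑ i ∈ range (n + 1 + 2), catalan i = ∑ i ∈ range (n + 2), catalan i + catalan (n + 2) :=
          sum_range_succ _ _
      _ ≤ 2 * 4 ^ n + 4 ^ (n + 1) := add_le_add ih (catalan_succ_le_four_pow (n + 1))
      _ ≤ 2 * 4 ^ (n + 1) := by rw [pow_succ]; omega

theorem two_mul_four_pow_le_four_mul_exp_one_pow {n : ℕ} (hn : 0 < n) :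
    (2 * 4 ^ n : ℝ) ≤ (4 * Real.exp 1) ^ n := by
  have h2 : (2 : ℝ) ≤ Real.exp 1 ^ n :=
    calc (2 : ℝ) ≤ Real.exp 1 := by linarith [Real.add_one_le_exp (1 : ℝ)]
      _ ≤ Real.exp 1 ^ n := le_self_pow₀ (Real.one_le_exp zero_le_one) hn.ne'
  rw [mul_pow, mul_comm]
  gcongr

theorem List.encard_setOf_prefix_ne_nil_le {α : Type*} (q : List α) :
    {s | s <+: q ∧ s ≠ []}.encard ≤ q.length := by
  calc {s | s <+: q ∧ s ≠ []}.encard ≤ ((fun i => q.take (i + 1)) '' Set.Iio q.length).encard := by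
        refine Set.encard_mono fun s ⟨hs, hne⟩ => ⟨s.length - 1, ?_, ?_⟩
        · have := hs.length_le; have := List.length_pos_iff.2 hne
          simp only [Set.mem_Iio]; omega
        · show q.take (s.length - 1 + 1) = s
          rw [Nat.sub_add_cancel (List.length_pos_iff.2 hne)]
          exact (List.prefix_iff_eq_take.1 hs).symm
    _ ≤ (Set.Iio q.length).encard := Set.encard_image_le _ _
    _ = q.length := by
        rw [← Finset.coe_range, Set.encard_coe_eq_coe_finsetCard, Finset.card_range]

def IsPrefixClosed {α : Type*} (S : Set (List α)) : Prop :=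
  ∀ s t, s <+: t → t ∈ S → s ∈ S

theorem IsPrefixClosed.preimage_cons {α : Type*} {S : Set (List α)} (hS : IsPrefixClosed S)
    (a : α) : IsPrefixClosed {s | a :: s ∈ S} :=
  fun s t hst ht => hS (a :: s) (a :: t) (List.cons_prefix_cons.2 ⟨rfl, hst⟩) ht

namespace BinaryTree

variable {α : Type*}

def paths : BinaryTree α → Set (List Bool)
  | nil => ∅
  | node _ l r => insert [] (List.cons false '' l.paths ∪ List.cons true '' r.paths)

theorem encard_paths : ∀ T : BinaryTree α, T.paths.encard = T.numNodes
  | nil => by simp [paths]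
  | node _ l r => by
    have hdisj : Disjoint (List.cons false '' l.paths) (List.cons true '' r.paths) := by
      simp [Set.disjoint_left]
    rw [paths, Set.encard_insert_of_notMem (by simp), Set.encard_union_eq hdisj,
      List.cons_injective.encard_image, List.cons_injective.encard_image,
      encard_paths l, encard_paths r]
    simp

theorem _root_.IsPrefixClosed.exists_paths_eq {S : Set (List Bool)} (hS : IsPrefixClosed S)
    {k : ℕ} (hk : ∀ s ∈ S, s.length < k) : ∃ T : BinaryTree Unit, T.paths = S := by
  induction k generalizing S with
  | zero => exact ⟨nil, by ext s; simpa [paths] using fun hs => hk s hs⟩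
  | succ k ih =>
    by_cases hnil : [] ∈ S
    · have hsub (b : Bool) : ∃ T : BinaryTree Unit, T.paths = {s | b :: s ∈ S} :=
        ih (hS.preimage_cons b) fun s hs => by simpa using hk _ hs
      obtain ⟨L, hL⟩ := hsub false
      obtain ⟨R, hR⟩ := hsub true
      refine ⟨node () L R, ?_⟩
      ext (_ | ⟨_ | _, s⟩) <;> simp [paths, hL, hR, hnil]
    · exact ⟨nil, by ext s; simpa [paths] using fun hs => hnil (hS [] s s.nil_prefix hs)⟩

theorem encard_setOf_numNodes_le (m : ℕ) :
    {T : BinaryTree Unit | T.numNodes ≤ m}.encard = ∑ i ∈ range (m + 1), catalan i := by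
  have hset : {T : BinaryTree Unit | T.numNodes ≤ m} =
      ↑((range (m + 1)).biUnion treesOfNumNodesEq) := by
    ext T; simp
  have hdisj : (range (m + 1) : Set ℕ).PairwiseDisjoint treesOfNumNodesEq :=
    fun i _ j _ hij => Finset.disjoint_left.2 fun T hi hj =>
      hij ((mem_treesOfNumNodesEq.1 hi).symm.trans (mem_treesOfNumNodesEq.1 hj))
  rw [hset, Set.encard_coe_eq_coe_finsetCard, card_biUnion hdisj]
  simp [treesOfNumNodesEq_card_eq_catalan]

end BinaryTree

section Subtree

variable {Υ : Set Node}

theorem exists_mem_terminalNodes_prefix (hfin : Υ.Finite) {t : Node} (ht : t ∈ Υ) :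
    ∃ q ∈ terminalNodes Υ, t <+: q := by
  obtain ⟨q, ⟨hq, htq⟩, hmax⟩ := Set.Finite.exists_maximalFor List.length {u ∈ Υ | t <+: u}
    (hfin.subset fun u hu => hu.1) ⟨t, ht, List.prefix_refl t⟩
  refine ⟨q, ⟨hq, fun b hb => ?_⟩, htq⟩
  have := hmax ⟨hb, htq.trans (q.prefix_append [b])⟩ (by simp)
  simp at this

theorem length_le_tsum_terminalNodes (hfin : Υ.Finite) {t : Node} (ht : t ∈ Υ) :
    (t.length : ℝ≥0∞) ≤ ∑' q : terminalNodes Υ, (q.1.length : ℝ≥0∞) := by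
  obtain ⟨q, hq, htq⟩ := exists_mem_terminalNodes_prefix hfin ht
  calc (t.length : ℝ≥0∞) ≤ q.length := by exact_mod_cast htq.length_le
    _ ≤ _ := ENNReal.le_tsum (⟨q, hq⟩ : terminalNodes Υ)

theorem encard_le_one_add_tsum_terminalNodes (hfin : Υ.Finite) :
    (Υ.encard : ℝ≥0∞) ≤ 1 + ∑' q : terminalNodes Υ, (q.1.length : ℝ≥0∞) := by
  have hcover : Υ ⊆ {[]} ∪ ⋃ q : terminalNodes Υ, {s | s <+: q.1 ∧ s ≠ []} := by
    intro t ht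
    by_cases hne : t = []
    · exact Or.inl hne
    · obtain ⟨q, hq, htq⟩ := exists_mem_terminalNodes_prefix hfin ht
      exact Or.inr (Set.mem_iUnion.2 ⟨⟨q, hq⟩, htq, hne⟩)
  calc (Υ.encard : ℝ≥0∞) = ∑' _ : Υ, 1 := (ENNReal.tsum_set_one Υ).symm
    _ ≤ ∑' _ : ↑({[]} ∪ ⋃ q : terminalNodes Υ, {s | s <+: q.1 ∧ s ≠ []}), 1 :=
        ENNReal.tsum_mono_subtype (fun _ => 1) hcover
    _ ≤ ∑' _ : ({[]} : Set Node), 1 +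
          ∑' _ : ↑(⋃ q : terminalNodes Υ, {s | s <+: q.1 ∧ s ≠ []}), 1 :=
        ENNReal.tsum_union_le (fun _ => 1) _ _
    _ ≤ 1 + ∑' q : terminalNodes Υ, ∑' _ : {s | s <+: q.1 ∧ s ≠ []}, 1 := by
        gcongr
        · simp
        · exact ENNReal.tsum_iUnion_le_tsum (fun _ => 1) _
    _ ≤ 1 + ∑' q : terminalNodes Υ, (q.1.length : ℝ≥0∞) := by
        gcongr with q
        rw [ENNReal.tsum_set_one]
        exact_mod_cast q.1.encard_setOf_prefix_ne_nil_le

theorem exists_paths_eq_of_tsum_terminalNodes_le {n : ℕ} (hfin : Υ.Finite)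
    (hΥ : IsPrefixClosed Υ) (hsum : ∑' q : terminalNodes Υ, (q.1.length : ℝ≥0∞) ≤ n) :
    ∃ T : BinaryTree Unit, T.numNodes ≤ n + 1 ∧ T.paths = Υ := by
  obtain ⟨T, hT⟩ := hΥ.exists_paths_eq (k := n + 1) fun s hs => by
    have : (s.length : ℝ≥0∞) ≤ n := (length_le_tsum_terminalNodes hfin hs).trans hsum
    exact Nat.lt_succ_of_le (by exact_mod_cast this)
  refine ⟨T, ?_, hT⟩
  have : ((T.numNodes : ℕ∞) : ℝ≥0∞) ≤ 1 + n := by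
    rw [← T.encard_paths, hT]
    exact (encard_le_one_add_tsum_terminalNodes hfin).trans (by gcongr)
  have : T.numNodes ≤ 1 + n := by exact_mod_cast this
  omega

end Subtree

/-- The number of (finite, nonempty, hence containing the root) subtrees `Υ` of the
binary tree whose terminal node set `Q` satisfies `Σ_{t ∈ Q} |t| ≤ n` does not
exceed `(4e)ⁿ`. -/
theorem count_subtrees_le (n : ℕ) (hn : 0 < n) :
    {Υ : Set Node | Υ.Finite ∧ ([] : Node) ∈ Υ ∧
        (∀ t u : Node, t <+: u → u ∈ Υ → t ∈ Υ) ∧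
        (∑' t : terminalNodes Υ, (t.1.length : ℝ≥0∞)) ≤ (n : ℝ≥0∞)}.encard ≤
      ENNReal.ofReal ((4 * Real.exp 1) ^ n) := by
  calc _ ≤ ((BinaryTree.paths '' {T : BinaryTree Unit | T.numNodes ≤ n + 1}).encard : ℝ≥0∞) := by
        refine ENat.toENNReal_mono (Set.encard_mono ?_)
        rintro Υ ⟨hfin, -, hΥ, hsum⟩
        obtain ⟨T, hT, rfl⟩ := exists_paths_eq_of_tsum_terminalNodes_le hfin hΥ hsum
        exact ⟨T, hT, rfl⟩
    _ ≤ ({T : BinaryTree Unit | T.numNodes ≤ n + 1}.encard : ℝ≥0∞) :=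
        ENat.toENNReal_mono (Set.encard_image_le _ _)
    _ ≤ ((2 * 4 ^ n : ℕ) : ℝ≥0∞) := by
        rw [BinaryTree.encard_setOf_numNodes_le]; exact_mod_cast sum_range_catalan_le n
    _ = ENNReal.ofReal (2 * 4 ^ n) := by rw [← ENNReal.ofReal_natCast]; push_cast; rfl
    _ ≤ ENNReal.ofReal ((4 * Real.exp 1) ^ n) :=
        ENNReal.ofReal_le_ofReal (two_mul_four_pow_le_four_mul_exp_one_pow hn)
end

section
/- Let T be the infinite binary tree with weight w(t) = (1+|t|)^{-2}. Fix a positive integer n and μ ∈ ℓ₁(T) with ‖μ‖₁ ≤ 1. Let Υ^μ be the n-essential subtree of T (nodes included starting from the root while ‖μ‖(t) > |t|/n, stopping where ‖μ‖(t) ≤ |t|/n). Then Σ_{u ∉ Υ^μ} s_μ(u)² w(u) ≤ 1/n, where s_μ(u) = Σ_{v ⪰ u} μ(v). -/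
open scoped ENNReal

/-! For `u ∉ Υ^μ` whose ancestor in `B^μ` sits at level `m`, monotonicity of `‖μ‖` along the
path gives `s_μ(u)² ≤ ‖μ‖(u) · m/n`. Expanding `‖μ‖(u) = Σ_{v ⪰ u} |μ(v)|` and exchanging the
sums, each `|μ(v)|` is charged by the prefixes of `v` outside `Υ^μ`: these are the prefixes of
length `j ∈ [m, |v|]`, all with the same ancestor in `B^μ`, so the charge is
`(m/n) Σ_{j ≥ m} (1+j)⁻² ≤ 1/n`. Summing against `‖μ‖₁ ≤ 1` gives the bound. -/

section Prefixes

variable {α : Type*}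

lemma tsum_prefix_eq_sum_take {M : Type*} [AddCommMonoid M] [TopologicalSpace M]
    (g : List α → M) (v : List α) :
    ∑' u : {u : List α // u <+: v}, g u = ∑ j ∈ Finset.range (v.length + 1), g (v.take j) := by
  classical
  have hinj : Set.InjOn (v.take ·) (Finset.range (v.length + 1) : Set ℕ) := by
    intro i hi j hj hij
    simp only [Finset.coe_range, Set.mem_Iio] at hi hj
    simpa [Nat.lt_succ_iff.mp hi, Nat.lt_succ_iff.mp hj] using congrArg List.length hij
  refine (tsum_subtype {u | u <+: v} g).trans ?_
  rw [tsum_eq_sum (s := (Finset.range (v.length + 1)).image (v.take ·)), Finset.sum_image hinj]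
  · exact Finset.sum_congr rfl fun j _ =>
      Set.indicator_of_mem (show v.take j ∈ {u | u <+: v} from List.take_prefix j v) g
  · intro u hu
    refine Set.indicator_of_notMem (fun hpre => hu ?_) g
    exact Finset.mem_image.mpr ⟨u.length, Finset.mem_range.mpr (Nat.lt_succ_of_le hpre.length_le),
      (List.prefix_iff_eq_take.mp hpre).symm⟩

lemma ENNReal.tsum_tsum_prefix_eq_tsum_sum_take (f : List α → List α → ℝ≥0∞) :
    ∑' u, ∑' v : {v : List α // u <+: v}, f u v =
      ∑' v, ∑ j ∈ Finset.range (v.length + 1), f (v.take j) v := by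
  calc ∑' u, ∑' v : {v : List α // u <+: v}, f u v
      = ∑' u, ∑' v, {v | u <+: v}.indicator (f u) v := tsum_congr fun u => tsum_subtype _ _
    _ = ∑' v, ∑' u, {v | u <+: v}.indicator (f u) v := ENNReal.tsum_comm
    _ = ∑' v, ∑' u : {u : List α // u <+: v}, f u v := by
        refine tsum_congr fun v => Eq.trans ?_ (tsum_subtype {u | u <+: v} (f · v)).symm
        congr! 2
    _ = _ := tsum_congr fun v => tsum_prefix_eq_sum_take (f · v) v

end Prefixes

lemma sum_Ico_inv_one_add_sq_le {m : ℕ} (hm : 0 < m) {N : ℕ} (hmN : m ≤ N) :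
    ∑ j ∈ Finset.Ico m N, ((1 + j : ℝ) ^ 2)⁻¹ ≤ (m : ℝ)⁻¹ - (N : ℝ)⁻¹ := by
  induction N, hmN using Nat.le_induction with
  | base => simp
  | succ N hmN ih =>
    have hN : (0 : ℝ) < N := by exact_mod_cast hm.trans_le hmN
    have step : ((1 + N : ℝ) ^ 2)⁻¹ ≤ (N : ℝ)⁻¹ - (N + 1 : ℝ)⁻¹ := by
      rw [inv_sub_inv hN.ne' (by positivity), show (N + 1 : ℝ) - N = 1 by ring, one_div]
      exact inv_anti₀ (by positivity) (by nlinarith)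
    rw [Finset.sum_Ico_succ_top hmN]
    push_cast
    linarith

lemma mul_sum_Ico_inv_one_add_sq_le_one (m N : ℕ) :
    (m : ℝ) * ∑ j ∈ Finset.Ico m N, ((1 + j : ℝ) ^ 2)⁻¹ ≤ 1 := by
  rcases Nat.eq_zero_or_pos m with rfl | hm
  · simp
  rcases le_total m N with hmN | hNm
  · have hm' : (0 : ℝ) < m := by exact_mod_cast hm
    calc (m : ℝ) * ∑ j ∈ Finset.Ico m N, ((1 + j : ℝ) ^ 2)⁻¹
        ≤ m * ((m : ℝ)⁻¹ - (N : ℝ)⁻¹) := by gcongr; exact sum_Ico_inv_one_add_sq_le hm hmN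
      _ ≤ 1 := by rw [mul_sub, mul_inv_cancel₀ hm'.ne']; simp only [sub_le_self_iff]; positivity
  · simp [Finset.Ico_eq_empty_of_le hNm]

lemma wgt_two (t : Node) : wgt 2 t = ((1 + t.length : ℝ) ^ 2)⁻¹ := by
  rw [wgt, Real.rpow_neg (by positivity), Real.rpow_two]

lemma wgt_nonneg (β : ℝ) (t : Node) : 0 ≤ wgt β t :=
  Real.rpow_nonneg (by positivity) _

section Summable

variable {μ : Node → ℝ} (hμ : MemL1 μ)
include hμ

lemma abs_Vstar_le_varAt (t : Node) : |Vstar μ t| ≤ varAt μ t := by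
  have h := norm_tsum_le_tsum_norm (f := fun u : {u : Node // t <+: u} => μ u.1)
    (hμ.subtype _)
  simpa only [Vstar, varAt, Real.norm_eq_abs] using h

lemma varAt_anti {s t : Node} (h : s <+: t) : varAt μ t ≤ varAt μ s :=
  Summable.tsum_le_tsum_of_inj (fun u => ⟨u.1, h.trans u.2⟩)
    (fun a b hab => by simpa [Subtype.ext_iff] using hab) (fun _ _ => abs_nonneg _)
    (fun _ => le_rfl) (hμ.subtype _) (hμ.subtype _)

lemma ofReal_varAt (t : Node) :
    ENNReal.ofReal (varAt μ t) = ∑' u : {u : Node // t <+: u}, ENNReal.ofReal |μ u| :=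
  ENNReal.ofReal_tsum_of_nonneg (fun _ => abs_nonneg _) (hμ.subtype _)

end Summable

def stopLevels (n : ℕ) (μ : Node → ℝ) (u : Node) : Set ℕ :=
  {j | j ≤ u.length ∧ varAt μ (u.take j) ≤ j / n}

/-- For `u ∉ Υ^μ`, the level of the node of `B^μ` above `u`; for `u ∈ Υ^μ` the junk value
`sInf ∅ = 0`, which makes `wgt 2 u * stopLevel n μ u` vanish on `Υ^μ`. -/
noncomputable def stopLevel (n : ℕ) (μ : Node → ℝ) (u : Node) : ℕ :=
  sInf (stopLevels n μ u)

section Stopping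

variable {n : ℕ} {μ : Node → ℝ}

lemma stopLevel_mem_stopLevels {u : Node} (hu : u ∉ essTree n μ) :
    stopLevel n μ u ∈ stopLevels n μ u := by
  simp only [essTree, Set.mem_ofPred_eq, not_forall, not_lt] at hu
  obtain ⟨s, hs, hstop⟩ := hu
  refine Nat.sInf_mem ⟨s.length, hs.length_le, ?_⟩
  rwa [← List.prefix_iff_eq_take.mp hs]

lemma stopLevels_take {u : Node} {j : ℕ} (hj : j ≤ u.length) :
    stopLevels n μ (u.take j) = stopLevels n μ u ∩ Set.Iic j := by
  ext i
  simp only [stopLevels, Set.mem_inter_iff, Set.mem_ofPred_eq, Set.mem_Iic, List.length_take,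
    List.take_take]
  constructor
  · rintro ⟨hi, hstop⟩
    have hij : i ≤ j := by omega
    rw [min_eq_left hij] at hstop
    exact ⟨⟨by omega, hstop⟩, hij⟩
  · rintro ⟨⟨hi, hstop⟩, hij⟩
    rw [min_eq_left hij]
    exact ⟨by omega, hstop⟩

lemma stopLevel_take {u : Node} {j : ℕ} (hj : j ≤ u.length) :
    stopLevel n μ (u.take j) = if stopLevel n μ u ≤ j then stopLevel n μ u else 0 := by
  rw [stopLevel, stopLevels_take hj]
  rcases (stopLevels n μ u).eq_empty_or_nonempty with hS | hS
  · simp [stopLevel, hS]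
  split_ifs with hmj
  · have hSj : (stopLevels n μ u ∩ Set.Iic j).Nonempty := ⟨_, Nat.sInf_mem hS, hmj⟩
    exact le_antisymm (Nat.sInf_le ⟨Nat.sInf_mem hS, hmj⟩) (Nat.sInf_le (Nat.sInf_mem hSj).1)
  · convert Nat.sInf_empty
    exact Set.eq_empty_of_forall_notMem fun i ⟨hi, hij⟩ => hmj ((Nat.sInf_le hi).trans hij)

lemma sq_Vstar_le (hμ : MemL1 μ) {u : Node} (hu : u ∉ essTree n μ) :
    Vstar μ u ^ 2 ≤ stopLevel n μ u / n * varAt μ u := by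
  have hstop := (stopLevel_mem_stopLevels hu).2
  have habs := abs_Vstar_le_varAt hμ u
  have hvar : varAt μ u ≤ stopLevel n μ u / n :=
    (varAt_anti hμ (List.take_prefix _ u)).trans hstop
  calc Vstar μ u ^ 2 = |Vstar μ u| * |Vstar μ u| := by rw [sq, abs_mul_abs_self]
    _ ≤ stopLevel n μ u / n * varAt μ u :=
      mul_le_mul (habs.trans hvar) habs (abs_nonneg _) (by positivity)

lemma sum_wgt_mul_stopLevel_take_le (v : Node) :
    ∑ j ∈ Finset.range (v.length + 1), wgt 2 (v.take j) * stopLevel n μ (v.take j) / n ≤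
      1 / n := by
  set m := stopLevel n μ v
  rw [← Finset.sum_div]
  refine div_le_div_of_nonneg_right ?_ n.cast_nonneg
  calc ∑ j ∈ Finset.range (v.length + 1), wgt 2 (v.take j) * stopLevel n μ (v.take j)
      = ∑ j ∈ Finset.range (v.length + 1), if m ≤ j then (m : ℝ) * ((1 + j : ℝ) ^ 2)⁻¹ else 0 := by
        refine Finset.sum_congr rfl fun j hj => ?_
        have hj : j ≤ v.length := Nat.lt_succ_iff.mp (Finset.mem_range.mp hj)
        rw [wgt_two, stopLevel_take hj, List.length_take, min_eq_left hj]
        split_ifs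
        · exact mul_comm _ _
        · simp
    _ = m * ∑ j ∈ Finset.Ico m (v.length + 1), ((1 + j : ℝ) ^ 2)⁻¹ := by
        rw [← Finset.sum_filter, Finset.mul_sum]
        congr 1
        ext j
        simp only [Finset.mem_filter, Finset.mem_range, Finset.mem_Ico]
        omega
    _ ≤ 1 := mul_sum_Ico_inv_one_add_sq_le_one _ _

end Stopping

theorem outside_essential_subtree_bound_general (n : ℕ) (μ : Node → ℝ)
    (hμ : MemL1 μ) (hμ1 : l1Norm μ ≤ 1) :
    (∑' u : {u : Node // u ∉ essTree n μ}, ENNReal.ofReal (wgt 2 u.1 * Vstar μ u.1 ^ 2)) ≤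
      ENNReal.ofReal (1 / (n : ℝ)) := by
  set cost : Node → ℝ≥0∞ := fun u => ENNReal.ofReal (wgt 2 u * stopLevel n μ u / n)
  set ν : Node → ℝ≥0∞ := fun v => ENNReal.ofReal |μ v|
  have hterm (u : Node) (hu : u ∉ essTree n μ) :
      ENNReal.ofReal (wgt 2 u * Vstar μ u ^ 2) ≤ cost u * ∑' v : {v : Node // u <+: v}, ν v := by
    have hw := wgt_nonneg 2 u
    rw [← ofReal_varAt hμ, ← ENNReal.ofReal_mul (by positivity), mul_div_assoc, mul_assoc]
    exact ENNReal.ofReal_le_ofReal (mul_le_mul_of_nonneg_left (sq_Vstar_le hμ hu) hw)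
  have hcost (v : Node) :
      ∑ j ∈ Finset.range (v.length + 1), cost (v.take j) ≤ ENNReal.ofReal (1 / n) := by
    rw [← ENNReal.ofReal_sum_of_nonneg fun j _ => by have := wgt_nonneg 2 (v.take j); positivity]
    exact ENNReal.ofReal_le_ofReal (sum_wgt_mul_stopLevel_take_le v)
  have hν : ∑' v, ν v ≤ 1 := by
    rw [← ENNReal.ofReal_tsum_of_nonneg (fun _ => abs_nonneg _) hμ, ← ENNReal.ofReal_one]
    exact ENNReal.ofReal_le_ofReal hμ1
  calc (∑' u : {u : Node // u ∉ essTree n μ}, ENNReal.ofReal (wgt 2 u.1 * Vstar μ u.1 ^ 2))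
      ≤ ∑' u : {u : Node // u ∉ essTree n μ}, cost u * ∑' v : {v : Node // u.1 <+: v}, ν v :=
        ENNReal.tsum_le_tsum fun u => hterm u u.2
    _ ≤ ∑' u, ∑' v : {v : Node // u <+: v}, cost u * ν v := by
        simp only [ENNReal.tsum_mul_left]
        exact ENNReal.tsum_comp_le_tsum_of_injective Subtype.val_injective _
    _ = ∑' v, (∑ j ∈ Finset.range (v.length + 1), cost (v.take j)) * ν v := by
        simp only [ENNReal.tsum_tsum_prefix_eq_tsum_sum_take (fun u v => cost u * ν v),
          Finset.sum_mul]
    _ ≤ ∑' v, ENNReal.ofReal (1 / n) * ν v := ENNReal.tsum_le_tsum fun v => by gcongr; exact hcost v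
    _ ≤ ENNReal.ofReal (1 / n) := by
        rw [ENNReal.tsum_mul_left]
        exact mul_le_of_le_one_right' hν

/-- For the critical weight `w(t) = (1+|t|)^{-2}`, a positive integer `n`, and
`μ ∈ ℓ₁(T)` with `‖μ‖₁ ≤ 1`, the contribution of the complement of the
`n`-essential subtree is small: `Σ_{u ∉ Υ^μ} s_μ(u)² w(u) ≤ 1/n`. -/
theorem outside_essential_subtree_bound (n : ℕ) (hn : 0 < n) (μ : Node → ℝ)
    (hμ : MemL1 μ) (hμ1 : l1Norm μ ≤ 1) :
    (∑' u : {u : Node // u ∉ essTree n μ}, ENNReal.ofReal (wgt 2 u.1 * Vstar μ u.1 ^ 2)) ≤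
      ENNReal.ofReal (1 / (n : ℝ)) :=
  outside_essential_subtree_bound_general n μ hμ hμ1
end
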